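/- arXiv:1003.2822 — 6 statements merged into one kernel-verified Lean document; each statement's English description precedes it below -/
import Mathlib

section
/- Let M ≥ 1, let η_1,…,η_M > 0, and let c > 0. For λ > 0 define the water-filling coefficients β_i(λ) = max(0, (1/c)(√(c/λ) − 1/η_i)). Suppose λ > 0 satisfies Σ_{i=1}^M β_i(λ) = 1. Then β(λ) minimizes the function f(β) = Σ_{i=1}^M η_i/(1 + β_i η_i c) over all β ∈ ℝ^M with β_i ≥ 0 for all i and Σ_{i=1}^M β_i = 1. (With η_i = |h̃_i|² where h̃_k = H(2πk/τ)σ_a√L/τ, c = N/σ², and β_i = |b_i|², this gives the filter coefficients b_i minimizing the mean-squared error of the linear estimator of the Fourier-coefficient vector from noisy samples under the energy constraint Tr(B*B) = 1.) -/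
lemma wf_key (η c lam t b : ℝ) (hη : 0 < η) (hc : 0 < c) (hlam : 0 < lam) (ht : 0 ≤ t)
    (hb : b = max 0 ((1/c) * (Real.sqrt (c/lam) - 1/η))) :
    η/(1 + b*η*c) + lam*b ≤ η/(1 + t*η*c) + lam*t := by
  set s := Real.sqrt (c/lam) with hs_def
  have hs : 0 < s := Real.sqrt_pos.2 (div_pos hc hlam)
  have hs2 : s*s*lam = c := by
    have h0 := Real.mul_self_sqrt (le_of_lt (div_pos hc hlam))
    rw [← hs_def] at h0
    field_simp at h0 ⊢
    linarith [h0]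
  have ha : 0 < 1 + t*η*c := by positivity
  by_cases h : (1/c) * (s - 1/η) ≤ 0
  · have hb0 : b = 0 := by rw [hb, max_eq_left h]
    have hηs : η*s ≤ 1 := by
      have h1 : s - 1/η ≤ 0 := by
        rcases le_or_gt (s - 1/η) 0 with h2 | h2
        · exact h2
        · exact absurd (mul_pos (by positivity : (0:ℝ) < 1/c) h2) (not_lt.2 h)
      have hinv : η*(1/η) = 1 := by field_simp
      nlinarith
    have hp : 0 ≤ lam*(1+t*η*c) - η*η*c := by
      nlinarith [mul_nonneg (mul_nonneg hlam.le (sub_nonneg.2 hηs))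
        (by positivity : (0:ℝ) ≤ 1 + η*s), mul_nonneg (mul_nonneg hlam.le ht) (by positivity : (0:ℝ) ≤ η*c)]
    have e : η/(1+t*η*c) + lam*t - η/(1+b*η*c) - lam*b
        = t*(lam*(1+t*η*c) - η*η*c)/(1+t*η*c) := by
      rw [hb0]; field_simp; ring
    have : 0 ≤ t*(lam*(1+t*η*c) - η*η*c)/(1+t*η*c) := by positivity
    linarith
  · push_neg at h
    have h1 : 0 < s - 1/η := by
      rcases mul_pos_iff.mp h with ⟨_, h2⟩ | ⟨h2, _⟩
      · exact h2
      · exact absurd (by positivity : (0:ℝ) < 1/c) (not_lt.2 h2.le)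
    have hbe : b = (1/c) * (s - 1/η) := by rw [hb, max_eq_right h.le]
    have hηs : 1 < η*s := by
      have hinv : η*(1/η) = 1 := by field_simp
      nlinarith [mul_pos hη h1]
    have hden : 1 + b*η*c = η*s := by
      rw [hbe]; field_simp; ring
    rw [hden]
    have hc' : c = s*s*lam := hs2.symm
    have e : η/(1+t*η*c) + lam*t - (η/(η*s) + lam*b)
        = lam*((1+t*η*c) - η*s)^2/(c*η*(1+t*η*c)) := by
      rw [hbe, hc']
      have ha' : (0:ℝ) < 1 + t*η*(s*s*lam) := by positivity
      field_simp
      ring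
    have : 0 ≤ lam*((1+t*η*c) - η*s)^2/(c*η*(1+t*η*c)) := by positivity
    linarith
/-- Water-filling optimality: if `β_i(λ) = max(0, (1/c)(√(c/λ) − 1/η_i))` and
`∑ β_i(λ) = 1`, then `β(λ)` minimizes `∑ η_i/(1 + β_i η_i c)` over the simplex
`{β : β_i ≥ 0, ∑ β_i = 1}`. -/
theorem water_filling_minimizes_mse
    (M : ℕ) (hM : 1 ≤ M) (η : Fin M → ℝ) (hη : ∀ i, 0 < η i)
    (c : ℝ) (hc : 0 < c) (lam : ℝ) (hlam : 0 < lam)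
    (β : Fin M → ℝ)
    (hβ : ∀ i, β i = max 0 ((1 / c) * (Real.sqrt (c / lam) - 1 / η i)))
    (hsum : ∑ i, β i = 1) :
    ∀ β' : Fin M → ℝ, (∀ i, 0 ≤ β' i) → (∑ i, β' i = 1) →
      ∑ i, η i / (1 + β i * η i * c) ≤ ∑ i, η i / (1 + β' i * η i * c) := by
  intro β' hβ' hsum'
  have H : ∀ i ∈ Finset.univ, η i/(1 + β i*η i*c) + lam*β i
      ≤ η i/(1 + β' i*η i*c) + lam*β' i :=
    fun i _ => wf_key (η i) c lam (β' i) (β i) (hη i) hc hlam (hβ' i) (hβ i)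
  have hS := Finset.sum_le_sum H
  rw [Finset.sum_add_distrib, Finset.sum_add_distrib, ← Finset.mul_sum, ← Finset.mul_sum,
    hsum, hsum'] at hS
  linarith
end

section
/- Let N ≥ M ≥ 1 and σ > 0. Let V be an N × M complex matrix with V*V = N·I_M, let B be the M × M diagonal matrix with diagonal entries b_1,…,b_M ∈ ℂ, and let H̃ be the M × M diagonal matrix with diagonal entries η_1,…,η_M > 0. Then the matrix V B H̃ B* V* + σ² I_N is invertible and Tr( H̃ B* V* (V B H̃ B* V* + σ² I_N)^{−1} V B H̃ ) = Σ_{i=1}^M η_i ( 1 − (σ²/N) / (|b_i|² η_i + σ²/N) ). -/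
/-!
Write `D = B H̃ Bᴴ = diag(|b_i|² η_i)`, so that `A = V D Vᴴ + σ² I`. Because `VᴴV = N·I`, `Vᴴ`
intertwines `A` with the diagonal matrix `N D + σ² I`, i.e. `Vᴴ A = (N D + σ² I) Vᴴ`, hence
`Vᴴ A⁻¹ V = N (N D + σ² I)⁻¹` is diagonal and the trace is a sum of scalar terms. `A` is
invertible because it is a positive semidefinite matrix plus `σ² I`.
-/

open Matrix

namespace Matrix

variable {m n α : Type*} [Fintype m] [Fintype n] [DecidableEq n]

theorem mul_nonsing_inv_eq_of_mul_eq [DecidableEq m] [CommRing α] {A : Matrix n n α}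
    {W : Matrix m n α} {K L : Matrix m m α} (hA : IsUnit A) (hWA : W * A = K * W)
    (hLK : L * K = 1) : W * A⁻¹ = L * W :=
  calc W * A⁻¹ = L * (K * W) * A⁻¹ := by rw [← Matrix.mul_assoc, hLK, Matrix.one_mul]
    _ = L * W * A * A⁻¹ := by rw [← hWA, ← Matrix.mul_assoc L W A]
    _ = L * W := mul_nonsing_inv_cancel_right _ _ ((isUnit_iff_isUnit_det A).mp hA)

theorem mul_nonsing_inv_mul_eq_diagonal [DecidableEq m] [Field α] {W : Matrix m n α}
    {V : Matrix n m α} {s c : α} (hWV : W * V = s • 1) (d : m → α)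
    (hA : IsUnit (V * diagonal d * W + c • 1)) (hd : ∀ i, s * d i + c ≠ 0) :
    W * (V * diagonal d * W + c • 1)⁻¹ * V = diagonal fun i => s / (s * d i + c) := by
  have hK : diagonal (fun i => s * d i + c) = s • diagonal d + c • 1 := by
    rw [← diagonal_smul, ← diagonal_one, ← diagonal_smul, diagonal_add]
    congr 1
    ext i
    simp
  have hWA : W * (V * diagonal d * W + c • 1) = diagonal (fun i => s * d i + c) * W := by
    rw [Matrix.mul_add, ← Matrix.mul_assoc, ← Matrix.mul_assoc, hWV, hK, Matrix.add_mul]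
    simp
  have hLK : diagonal (fun i => (s * d i + c)⁻¹) * diagonal (fun i => s * d i + c) = 1 := by
    simp [inv_mul_cancel₀ (hd _)]
  rw [mul_nonsing_inv_eq_of_mul_eq hA hWA hLK, Matrix.mul_assoc, hWV, Matrix.mul_smul,
    Matrix.mul_one, ← diagonal_smul]
  congr 1
  ext i
  simp [div_eq_mul_inv]

open scoped ComplexOrder in
theorem isUnit_mul_mul_conjTranspose_add_smul_one {𝕜 : Type*} [RCLike 𝕜] {D : Matrix m m 𝕜}
    (hD : D.PosSemidef) (V : Matrix n m 𝕜) {c : 𝕜} (hc : 0 < c) : IsUnit (V * D * Vᴴ + c • 1) :=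
  (PosDef.posSemidef_add (hD.mul_mul_conjTranspose_same V) (PosDef.one.smul hc)).isUnit

theorem diagonal_mul_diagonal_ofReal_mul_conjTranspose [DecidableEq m] (b : m → ℂ)
    (η : m → ℝ) :
    diagonal b * diagonal (fun i => (η i : ℂ)) * (diagonal b)ᴴ =
      diagonal fun i => ((‖b i‖ ^ 2 * η i : ℝ) : ℂ) := by
  simp only [diagonal_conjTranspose, diagonal_mul_diagonal]
  congr 1
  ext i
  rw [Pi.star_apply, Complex.star_def, mul_right_comm, Complex.mul_conj']
  push_cast
  ring

theorem trace_diagonal_mul_conjTranspose_mul_diagonal [DecidableEq m] (b g : m → ℂ)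
    (η : m → ℝ) :
    (diagonal (fun i => (η i : ℂ)) * (diagonal b)ᴴ * diagonal g * diagonal b *
      diagonal (fun i => (η i : ℂ))).trace = ∑ i, g i * ((‖b i‖ ^ 2 * η i : ℝ) : ℂ) * η i := by
  simp only [diagonal_conjTranspose, diagonal_mul_diagonal, trace_diagonal]
  refine Finset.sum_congr rfl fun i _ => ?_
  rw [Pi.star_apply, Complex.star_def]
  push_cast
  linear_combination (g i * η i ^ 2) * Complex.conj_mul' (b i)

end Matrix

theorem one_sub_div_div_add_div {K : Type*} [Field K] {n x c : K} (hn : n ≠ 0)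
    (h : n * x + c ≠ 0) : 1 - c / n / (x + c / n) = n * x / (n * x + c) := by
  rw [eq_div_iff h]
  field_simp
  ring

theorem mmse_trace_identity_general
    (N M : ℕ) (hNM : M ≤ N) (σ : ℝ) (hσ : 0 < σ)
    (V : Matrix (Fin N) (Fin M) ℂ)
    (hV : Vᴴ * V = (N : ℂ) • (1 : Matrix (Fin M) (Fin M) ℂ))
    (b : Fin M → ℂ) (η : Fin M → ℝ) (hη : ∀ i, 0 < η i)
    (B H A : Matrix _ _ ℂ)
    (hB : B = Matrix.diagonal b)
    (hH : H = Matrix.diagonal fun i => (η i : ℂ))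
    (hA : A = V * B * H * Bᴴ * Vᴴ + ((σ : ℂ) ^ 2) • (1 : Matrix (Fin N) (Fin N) ℂ)) :
    IsUnit A ∧
    (H * Bᴴ * Vᴴ * A⁻¹ * V * B * H).trace =
      ((∑ i, η i * (1 - (σ ^ 2 / N) / (‖b i‖ ^ 2 * η i + σ ^ 2 / N)) : ℝ) : ℂ) := by
  subst hB hH
  have hd : ∀ i, 0 ≤ ‖b i‖ ^ 2 * η i := fun i => by have := hη i; positivity
  have hden : ∀ i, (N : ℂ) * ((‖b i‖ ^ 2 * η i : ℝ) : ℂ) + (σ : ℂ) ^ 2 ≠ 0 := fun i => by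
    have := hd i; exact_mod_cast (by positivity : (N : ℝ) * (‖b i‖ ^ 2 * η i) + σ ^ 2 ≠ 0)
  have hA' : A = V * diagonal (fun i => ((‖b i‖ ^ 2 * η i : ℝ) : ℂ)) * Vᴴ + (σ : ℂ) ^ 2 • 1 := by
    rw [hA, ← diagonal_mul_diagonal_ofReal_mul_conjTranspose b η]
    simp only [Matrix.mul_assoc]
  have hunit : IsUnit A := by
    open scoped ComplexOrder in
    exact hA' ▸ isUnit_mul_mul_conjTranspose_add_smul_one
      (posSemidef_diagonal_iff.mpr fun i => by exact_mod_cast hd i) V (by positivity)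
  refine ⟨hunit, ?_⟩
  have hG : Vᴴ * A⁻¹ * V = diagonal fun i => N / (N * ((‖b i‖ ^ 2 * η i : ℝ) : ℂ) + σ ^ 2) := by
    rw [hA']
    exact mul_nonsing_inv_mul_eq_diagonal hV _ (hA' ▸ hunit) hden
  rw [Matrix.mul_assoc _ Vᴴ, Matrix.mul_assoc _ (Vᴴ * A⁻¹), hG,
    trace_diagonal_mul_conjTranspose_mul_diagonal]
  push_cast
  refine Finset.sum_congr rfl fun i _ => ?_
  have hN : (N : ℂ) ≠ 0 := by have := i.pos; norm_cast; omega
  have hdeni := hden i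
  push_cast at hdeni
  rw [one_sub_div_div_add_div hN hdeni]
  ring

/-- Trace identity for the MMSE expression: if `VᴴV = N·I`, `B = diag(b)`,
`H̃ = diag(η)` with `η_i > 0`, then `A = V B H̃ Bᴴ Vᴴ + σ²I` is invertible and
`Tr(H̃ Bᴴ Vᴴ A⁻¹ V B H̃) = ∑_i η_i (1 − (σ²/N)/(|b_i|² η_i + σ²/N))`. -/
theorem mmse_trace_identity
    (N M : ℕ) (hM : 1 ≤ M) (hNM : M ≤ N) (σ : ℝ) (hσ : 0 < σ)
    (V : Matrix (Fin N) (Fin M) ℂ)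
    (hV : Vᴴ * V = (N : ℂ) • (1 : Matrix (Fin M) (Fin M) ℂ))
    (b : Fin M → ℂ) (η : Fin M → ℝ) (hη : ∀ i, 0 < η i)
    (B H A : Matrix _ _ ℂ)
    (hB : B = Matrix.diagonal b)
    (hH : H = Matrix.diagonal fun i => (η i : ℂ))
    (hA : A = V * B * H * Bᴴ * Vᴴ + ((σ : ℂ) ^ 2) • (1 : Matrix (Fin N) (Fin N) ℂ)) :
    IsUnit A ∧
    (H * Bᴴ * Vᴴ * A⁻¹ * V * B * H).trace =
      ((∑ i, η i * (1 - (σ ^ 2 / N) / (‖b i‖ ^ 2 * η i + σ ^ 2 / N)) : ℝ) : ℂ) :=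
  mmse_trace_identity_general N M hNM σ hσ V hV b η hη B H A hB hH hA
end

section
/- Let (Ω, F, P) be a probability space, τ > 0, L ≥ 1. Let t_1,…,t_L : Ω → ℝ be random variables each uniformly distributed on [0,τ), and let a_1,…,a_L : Ω → ℂ be square-integrable random variables with E[a_l · conj(a_{l′})] = σ_a² if l = l′ and 0 if l ≠ l′, such that the random vector (a_1,…,a_L) is independent of (t_1,…,t_L). For integers k and complex numbers h_k, define the random variable X_k = (1/τ) h_k Σ_{l=1}^L a_l e^{−2πi k t_l/τ}. Then for all integers k, k′: E[X_k · conj(X_{k′})] = (σ_a² L/τ²) |h_k|² if k = k′, and E[X_k · conj(X_{k′})] = 0 if k ≠ k′. -/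
/-!
Expanding both sums, `E[X_k conj X_{k'}]` becomes a double sum over pulses `l, l'` of
`E[a_l conj a_{l'}] · E[e^{-2πi k t_l/τ} conj e^{-2πi k' t_{l'}/τ}]`: each term factors because
the amplitudes are independent of the delays. Uncorrelated amplitudes remove the off-diagonal
terms, and on the diagonal the phase is the character `e^{-2πi (k-k') t_l/τ}` averaged over a full
period by the uniform delay, which gives `δ_{k k'}`.
-/

open MeasureTheory ProbabilityTheory Real
open ComplexConjugate

noncomputable def fourierPhase (τ : ℝ) (k : ℤ) (x : ℝ) : ℂ :=
  Complex.exp (-(2 * π * Complex.I * k * x / τ))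

lemma fourierPhase_eq_exp_mul (τ : ℝ) (k : ℤ) (x : ℝ) :
    fourierPhase τ k x = Complex.exp ((-2 * π * Complex.I * k / τ) * x) := by
  rw [fourierPhase]; ring_nf

lemma continuous_fourierPhase (τ : ℝ) (k : ℤ) : Continuous (fourierPhase τ k) := by
  unfold fourierPhase; fun_prop

lemma norm_fourierPhase (τ : ℝ) (k : ℤ) (x : ℝ) : ‖fourierPhase τ k x‖ = 1 := by
  rw [fourierPhase, Complex.norm_exp]
  simp

lemma fourierPhase_mul_conj (τ : ℝ) (k k' : ℤ) (x : ℝ) :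
    fourierPhase τ k x * conj (fourierPhase τ k' x) = fourierPhase τ (k - k') x := by
  simp only [fourierPhase, ← Complex.exp_conj, ← Complex.exp_add, map_neg, map_div₀, map_mul,
    Complex.conj_ofReal, Complex.conj_I, map_ofNat, map_intCast, Int.cast_sub]
  ring_nf

lemma setIntegral_Ico_fourierPhase {τ : ℝ} (hτ : 0 < τ) (m : ℤ) :
    ∫ x in Set.Ico 0 τ, fourierPhase τ m x = if m = 0 then (τ : ℂ) else 0 := by
  rw [integral_Ico_eq_integral_Ioc, ← intervalIntegral.integral_of_le hτ.le]
  split_ifs with hm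
  · simp [hm, fourierPhase]
  · have hτ' : (τ : ℂ) ≠ 0 := by exact_mod_cast hτ.ne'
    have hc : (-2 * π * Complex.I * m / τ : ℂ) ≠ 0 := by
      simp [hm, hτ', Real.pi_ne_zero, Complex.I_ne_zero]
    have hperiod : (-2 * π * Complex.I * m / τ : ℂ) * τ = (-m : ℤ) * (2 * π * Complex.I) := by
      push_cast; field_simp
    simp_rw [fourierPhase_eq_exp_mul]
    rw [integral_exp_mul_complex hc, hperiod, Complex.exp_int_mul_two_pi_mul_I]
    simp

lemma integral_fourierPhase_of_map_eq {Ω : Type*} [MeasurableSpace Ω] {P : Measure Ω}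
    {τ : ℝ} {T : Ω → ℝ} (hτ : 0 < τ) (hT : AEMeasurable T P)
    (hT_unif : P.map T = (ENNReal.ofReal τ)⁻¹ • volume.restrict (Set.Ico (0 : ℝ) τ)) (m : ℤ) :
    ∫ ω, fourierPhase τ m (T ω) ∂P = if m = 0 then 1 else 0 := by
  rw [← integral_map hT (continuous_fourierPhase τ m).aestronglyMeasurable, hT_unif,
    integral_smul_measure, setIntegral_Ico_fourierPhase hτ, ENNReal.toReal_inv,
    ENNReal.toReal_ofReal hτ.le]
  split_ifs
  · simp [hτ.ne']
  · simp

lemma integral_fourierPhase_mul_conj_of_map_eq {Ω : Type*} [MeasurableSpace Ω] {P : Measure Ω}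
    {τ : ℝ} {T : Ω → ℝ} (hτ : 0 < τ) (hT : AEMeasurable T P)
    (hT_unif : P.map T = (ENNReal.ofReal τ)⁻¹ • volume.restrict (Set.Ico (0 : ℝ) τ)) (k k' : ℤ) :
    ∫ ω, fourierPhase τ k (T ω) * conj (fourierPhase τ k' (T ω)) ∂P =
      if k = k' then 1 else 0 := by
  simp_rw [fourierPhase_mul_conj, integral_fourierPhase_of_map_eq hτ hT hT_unif, sub_eq_zero]

section

variable {Ω : Type*} [MeasurableSpace Ω] {P : Measure Ω}

lemma memLp_mul_fourierPhase {f : Ω → ℂ} {T : Ω → ℝ} (hf : MemLp f 2 P)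
    (hT : AEMeasurable T P) (τ : ℝ) (k : ℤ) :
    MemLp (fun ω => f ω * fourierPhase τ k (T ω)) 2 P :=
  hf.of_le (hf.1.mul <|
      (continuous_fourierPhase τ k).comp_aestronglyMeasurable hT.aestronglyMeasurable)
    (Filter.Eventually.of_forall fun ω => by simp [norm_fourierPhase])

lemma integrable_mul_conj_of_memLp_two {f g : Ω → ℂ} (hf : MemLp f 2 P) (hg : MemLp g 2 P) :
    Integrable (fun ω => f ω * conj (g ω)) P :=
  hf.integrable_mul hg.star

lemma integral_sum_mul_conj_sum {ι : Type*} [Fintype ι] {f g : ι → Ω → ℂ}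
    (hf : ∀ i, MemLp (f i) 2 P) (hg : ∀ j, MemLp (g j) 2 P) :
    ∫ ω, (∑ i, f i ω) * conj (∑ j, g j ω) ∂P = ∑ i, ∑ j, ∫ ω, f i ω * conj (g j ω) ∂P := by
  simp_rw [map_sum, Finset.sum_mul_sum]
  rw [integral_finsetSum _ fun i _ =>
    integrable_finsetSum _ fun j _ => integrable_mul_conj_of_memLp_two (hf i) (hg j)]
  exact Finset.sum_congr rfl fun i _ =>
    integral_finsetSum _ fun j _ => integrable_mul_conj_of_memLp_two (hf i) (hg j)

lemma integral_mul_comp_mul_conj_of_indepFun {ι : Type*} {A : Ω → ι → ℂ} {T : Ω → ι → ℝ}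
    (hAT : IndepFun A T P) (hA : AEMeasurable A P) (hT : AEMeasurable T P)
    {φ ψ : ℝ → ℂ} (hφ : Measurable φ) (hψ : Measurable ψ) (l l' : ι) :
    ∫ ω, A ω l * φ (T ω l) * conj (A ω l' * ψ (T ω l')) ∂P =
      (∫ ω, A ω l * conj (A ω l') ∂P) * ∫ ω, φ (T ω l) * conj (ψ (T ω l')) ∂P := by
  have hf : Measurable fun v : ι → ℂ => v l * conj (v l') := by fun_prop
  have hg : Measurable fun u : ι → ℝ => φ (u l) * conj (ψ (u l')) := by fun_prop
  rw [← hAT.integral_fun_comp_mul_comp hA hT hf.aestronglyMeasurable hg.aestronglyMeasurable]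
  congr 1 with ω
  simp only [map_mul]
  ring

end

theorem fourier_coefficient_covariance_general
    {Ω : Type*} [MeasurableSpace Ω] (P : Measure Ω)
    (τ : ℝ) (hτ : 0 < τ) (L : ℕ)
    (t : Fin L → Ω → ℝ) (ht_meas : ∀ l, Measurable (t l))
    (ht_unif : ∀ l, P.map (t l) =
      (ENNReal.ofReal τ)⁻¹ • (volume.restrict (Set.Ico (0 : ℝ) τ)))
    (a : Fin L → Ω → ℂ)
    (ha_L2 : ∀ l, MemLp (a l) 2 P)
    (σa : ℝ)
    (ha_cov : ∀ l l' : Fin L,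
      (∫ ω, a l ω * (starRingEnd ℂ) (a l' ω) ∂P) =
        if l = l' then ((σa ^ 2 : ℝ) : ℂ) else 0)
    (h_indep : IndepFun (fun ω l => a l ω) (fun ω l => t l ω) P)
    (h : ℤ → ℂ)
    (X : ℤ → Ω → ℂ)
    (hX : ∀ (k : ℤ) (ω : Ω), X k ω = (1 / τ) * h k *
      ∑ l, a l ω * Complex.exp (-(2 * π * Complex.I * k * (t l ω) / τ))) :
    ∀ k k' : ℤ,
      (∫ ω, X k ω * (starRingEnd ℂ) (X k' ω) ∂P) =
        if k = k' then ((σa ^ 2 * L / τ ^ 2 * ‖h k‖ ^ 2 : ℝ) : ℂ) else 0 := by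
  intro k k'
  have hY : ∀ k l, MemLp (fun ω => a l ω * fourierPhase τ k (t l ω)) 2 P :=
    fun k l => memLp_mul_fourierPhase (ha_L2 l) (ht_meas l).aemeasurable τ k
  have hterm : ∀ l l', ∫ ω, a l ω * fourierPhase τ k (t l ω) *
      conj (a l' ω * fourierPhase τ k' (t l' ω)) ∂P =
        (if l = l' then ((σa ^ 2 : ℝ) : ℂ) else 0) * if k = k' then 1 else 0 := by
    intro l l'
    rw [integral_mul_comp_mul_conj_of_indepFun h_indep
      (aemeasurable_pi_lambda _ fun l => (ha_L2 l).aemeasurable)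
      (measurable_pi_lambda _ ht_meas).aemeasurable (continuous_fourierPhase τ k).measurable
      (continuous_fourierPhase τ k').measurable, ha_cov]
    by_cases hl : l = l'
    · subst hl
      rw [integral_fourierPhase_mul_conj_of_map_eq hτ (ht_meas l).aemeasurable (ht_unif l)]
    · simp [hl]
  have hnorm : (1 / τ * h k) * conj (1 / τ * h k) = ((‖h k‖ ^ 2 / τ ^ 2 : ℝ) : ℂ) := by
    rw [Complex.mul_conj']
    simp only [one_div, Complex.norm_mul, norm_inv, Complex.norm_real, Real.norm_eq_abs,
      abs_of_pos hτ, Complex.ofReal_mul, Complex.ofReal_inv, Complex.ofReal_div, Complex.ofReal_pow]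
    ring
  calc ∫ ω, X k ω * conj (X k' ω) ∂P
      = ∫ ω, (1 / τ * h k) * conj (1 / τ * h k') *
          ((∑ l, a l ω * fourierPhase τ k (t l ω)) *
            conj (∑ l, a l ω * fourierPhase τ k' (t l ω))) ∂P := by
        congr 1 with ω
        rw [hX, hX, map_mul]
        unfold fourierPhase
        ring
    _ = _ := by
        rw [integral_const_mul, integral_sum_mul_conj_sum (hY k) (hY k')]
        simp only [hterm, ite_mul, zero_mul, Finset.sum_ite_eq, Finset.mem_univ, if_true,
          Finset.sum_const, Finset.card_univ, Fintype.card_fin, nsmul_eq_mul]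
        split_ifs with hk
        · subst hk
          rw [← mul_assoc, hnorm]
          push_cast; ring
        · simp

/-- Covariance of the Fourier coefficients of a periodic stream with random delays
(uniform on `[0,τ)`) and uncorrelated amplitudes of variance `σ_a²`, the amplitude
vector being independent of the delay vector:
`E[X_k conj(X_{k'})] = (σ_a² L/τ²)|h_k|² δ_{k,k'}`. -/
theorem fourier_coefficient_covariance
    {Ω : Type*} [MeasurableSpace Ω] (P : Measure Ω) [IsProbabilityMeasure P]
    (τ : ℝ) (hτ : 0 < τ) (L : ℕ) (hL : 1 ≤ L)
    (t : Fin L → Ω → ℝ) (ht_meas : ∀ l, Measurable (t l))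
    (ht_unif : ∀ l, P.map (t l) =
      (ENNReal.ofReal τ)⁻¹ • (volume.restrict (Set.Ico (0 : ℝ) τ)))
    (a : Fin L → Ω → ℂ) (ha_meas : ∀ l, Measurable (a l))
    (ha_L2 : ∀ l, MemLp (a l) 2 P)
    (σa : ℝ)
    (ha_cov : ∀ l l' : Fin L,
      (∫ ω, a l ω * (starRingEnd ℂ) (a l' ω) ∂P) =
        if l = l' then ((σa ^ 2 : ℝ) : ℂ) else 0)
    (h_indep : IndepFun (fun ω l => a l ω) (fun ω l => t l ω) P)
    (h : ℤ → ℂ)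
    (X : ℤ → Ω → ℂ)
    (hX : ∀ (k : ℤ) (ω : Ω), X k ω = (1 / τ) * h k *
      ∑ l, a l ω * Complex.exp (-(2 * π * Complex.I * k * (t l ω) / τ))) :
    ∀ k k' : ℤ,
      (∫ ω, X k ω * (starRingEnd ℂ) (X k' ω) ∂P) =
        if k = k' then ((σa ^ 2 * L / τ ^ 2 * ‖h k‖ ^ 2 : ℝ) : ℂ) else 0 :=
  fourier_coefficient_covariance_general P τ hτ L t ht_meas ht_unif a ha_L2 σa ha_cov h_indep h X hX
end

section
/- Let τ, R > 0, set r = ⌈(R/τ + 3)/2⌉ − 1, and let g, h : ℝ → ℂ be bounded measurable functions with g(t) = 0 for |t| > τ/2 and h(t) = 0 for |t| ≥ R/2. Let x̃(t) = Σ_{l=1}^L a_l h(t − t_l) be a finite stream of pulses with t_l ∈ [0,τ) and a_l ∈ ℂ, let x(t) = Σ_{m∈ℤ} x̃(t − mτ) be its τ-periodic continuation, and define g_r(t) = Σ_{m=−r}^{r} g(t + mτ). Then for every sampling instant θ ∈ [0,τ): ∫_ℝ conj(g_r(t − θ)) x̃(t) dt = ∫_ℝ conj(g(t − θ)) x(t)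 dt. That is, filtering the finite stream with g_r* (−t) and sampling in [0,τ) produces exactly the samples obtained in the periodic setting with kernel g*(−t). -/
/-!
Split the extended kernel `g_r` into its `2r + 1` shifted copies and translate each of the
resulting integrals by `mτ`: the left side becomes `∫ conj(g(u − θ)) ∑_{|m| ≤ r} x̃(u − mτ) du`.
On the support `|u − θ| ≤ τ/2` of `g(· − θ)` every pulse `h(u − mτ − t_l)` with `|m| > r`
vanishes, because `|u − t_l| ≤ 3τ/2` and `(r + 1)τ ≥ R/2 + 3τ/2` by the choice of `r`; so the
truncated sum agrees there with the full periodic continuation `x(u)`.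
-/

open MeasureTheory

lemma half_add_le_succ_mul_of_eq_ceil {τ R : ℝ} (hτ : 0 < τ) {r : ℤ}
    (hr : r = ⌈(R / τ + 3) / 2⌉ - 1) : R / 2 + 3 * τ / 2 ≤ (r + 1) * τ := by
  have hceil : (R / τ + 3) / 2 ≤ (r + 1 : ℝ) := by
    rw [hr]
    push_cast
    linarith [Int.le_ceil ((R / τ + 3) / 2)]
  calc R / 2 + 3 * τ / 2 = (R / τ + 3) / 2 * τ := by field_simp
    _ ≤ (r + 1) * τ := mul_le_mul_of_nonneg_right hceil hτ.le

lemma half_le_abs_sub_int_mul {τ R s : ℝ} (hτ : 0 < τ) {r m : ℤ}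
    (hrR : R / 2 + 3 * τ / 2 ≤ (r + 1) * τ) (hs : |s| ≤ 3 * τ / 2)
    (hm : m ∉ Finset.Icc (-r) r) : R / 2 ≤ |s - m * τ| := by
  have hrm : (r + 1 : ℝ) ≤ |(m : ℝ)| := by
    have : r + 1 ≤ |m| := by
      rw [Finset.mem_Icc, ← abs_le, not_le] at hm
      omega
    exact_mod_cast this
  calc R / 2 ≤ (r + 1) * τ - 3 * τ / 2 := by linarith
    _ ≤ |(m : ℝ)| * τ - |s| := by gcongr
    _ = |m * τ| - |s| := by rw [abs_mul, abs_of_pos hτ]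
    _ ≤ |s - m * τ| := by
      rw [abs_sub_comm]
      linarith [abs_sub_abs_le_abs_sub ((m : ℝ) * τ) s]

lemma integrable_of_bounded_of_eq_zero_of_lt_abs {E : Type*} [NormedAddCommGroup E]
    {f : ℝ → E} (hf : AEStronglyMeasurable f) {C ρ : ℝ} (hb : ∀ u, ‖f u‖ ≤ C)
    (h0 : ∀ u, ρ < |u| → f u = 0) : Integrable f := by
  have hsupp : Function.support f ⊆ Metric.closedBall 0 ρ := fun u hu => by
    simpa [Real.norm_eq_abs] using not_lt.mp (mt (h0 u) hu)
  exact (integrableOn_iff_integrable_of_support_subset hsupp).mp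
    (Measure.integrableOn_of_bounded measure_closedBall_lt_top.ne hf
      (Filter.Eventually.of_forall hb))

lemma integral_sum_shift_mul_eq_integral_mul_sum_shift {A ι : Type*} [NormedRing A]
    [NormedSpace ℝ A] {k x : ℝ → A} (s : Finset ι) (c : ι → ℝ)
    (hint : ∀ i ∈ s, Integrable (fun u => k (u + c i) * x u)) :
    ∫ u, (∑ i ∈ s, k (u + c i)) * x u = ∫ u, k u * ∑ i ∈ s, x (u - c i) := by
  simp_rw [Finset.sum_mul, Finset.mul_sum]
  rw [integral_finsetSum _ hint,
    integral_finsetSum _ fun i hi => by simpa using (hint i hi).comp_sub_right (c i)]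
  refine Finset.sum_congr rfl fun i _ => ?_
  rw [← integral_sub_right_eq_self _ (c i)]
  simp

section PulseStream

variable {ι : Type*} [Fintype ι] (a : ι → ℂ) (t : ι → ℝ) (h : ℝ → ℂ)

noncomputable def pulseStream (u : ℝ) : ℂ := ∑ l, a l * h (u - t l)

variable {a t h}

lemma measurable_pulseStream (hh : Measurable h) : Measurable (pulseStream a t h) :=
  Finset.measurable_sum _ fun _ _ => measurable_const.mul (hh.comp (measurable_sub_const _))

lemma norm_pulseStream_le {C : ℝ} (hb : ∀ u, ‖h u‖ ≤ C) (u : ℝ) :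
    ‖pulseStream a t h u‖ ≤ ∑ l, ‖a l‖ * C :=
  (norm_sum_le _ _).trans <| Finset.sum_le_sum fun l _ => by
    rw [norm_mul]
    exact mul_le_mul_of_nonneg_left (hb _) (norm_nonneg _)

lemma pulseStream_eq_zero {R u : ℝ} (hs : ∀ v, R / 2 ≤ |v| → h v = 0)
    (hu : ∀ l, R / 2 ≤ |u - t l|) : pulseStream a t h u = 0 :=
  Finset.sum_eq_zero fun l _ => by rw [hs _ (hu l), mul_zero]

lemma tsum_pulseStream_sub_int_mul {τ R θ u : ℝ} (hτ : 0 < τ) {r : ℤ}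
    (hrR : R / 2 + 3 * τ / 2 ≤ (r + 1) * τ) (hs : ∀ v, R / 2 ≤ |v| → h v = 0)
    (ht : ∀ l, t l ∈ Set.Ico 0 τ) (hθ : θ ∈ Set.Ico 0 τ) (hu : |u - θ| ≤ τ / 2) :
    ∑' m : ℤ, pulseStream a t h (u - m * τ) =
      ∑ m ∈ Finset.Icc (-r) r, pulseStream a t h (u - m * τ) := by
  refine tsum_eq_sum fun m hm => pulseStream_eq_zero hs fun l => ?_
  have hul : |u - t l| ≤ 3 * τ / 2 := by
    obtain ⟨htl₀, htl₁⟩ := ht l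
    obtain ⟨hθ₀, hθ₁⟩ := hθ
    rw [abs_le] at hu ⊢
    constructor <;> linarith
  rw [sub_right_comm]
  exact half_le_abs_sub_int_mul hτ hrR hul hm

end PulseStream

theorem finite_stream_samples_equal_periodic_samples_general
    (τ R : ℝ) (hτ : 0 < τ)
    (r : ℤ) (hr : r = ⌈(R / τ + 3) / 2⌉ - 1)
    (g h : ℝ → ℂ) (hgm : Measurable g) (hhm : Measurable h)
    (Cg Ch : ℝ) (hgb : ∀ u : ℝ, ‖g u‖ ≤ Cg) (hhb : ∀ u : ℝ, ‖h u‖ ≤ Ch)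
    (hgs : ∀ u : ℝ, τ / 2 < |u| → g u = 0)
    (hhs : ∀ u : ℝ, R / 2 ≤ |u| → h u = 0)
    (L : ℕ) (t : Fin L → ℝ) (a : Fin L → ℂ)
    (ht : ∀ l, t l ∈ Set.Ico 0 τ)
    (θ : ℝ) (hθ : θ ∈ Set.Ico 0 τ) :
    (∫ u : ℝ,
        (starRingEnd ℂ) (∑ m ∈ Finset.Icc (-r) r, g (u - θ + m * τ)) *
          ∑ l, a l * h (u - t l)) =
    (∫ u : ℝ,
        (starRingEnd ℂ) (g (u - θ)) *
          ∑' m : ℤ, ∑ l, a l * h (u - t l - m * τ)) := by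
  set k : ℝ → ℂ := fun v => starRingEnd ℂ (g (v - θ))
  have hk : Integrable k :=
    (integrable_of_bounded_of_eq_zero_of_lt_abs (f := fun v => starRingEnd ℂ (g v))
      (Complex.continuous_conj.measurable.comp hgm).aestronglyMeasurable (by simpa using hgb)
      (by simpa using hgs)).comp_sub_right θ
  have hint : ∀ m : ℤ, Integrable (fun u => k (u + m * τ) * pulseStream a t h u) := fun m =>
    (hk.comp_add_right (m * τ)).mul_bdd (measurable_pulseStream hhm).aestronglyMeasurable
      (Filter.Eventually.of_forall (norm_pulseStream_le hhb))
  have hperiodic : ∀ u, k u * ∑' m : ℤ, pulseStream a t h (u - m * τ) =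
      k u * ∑ m ∈ Finset.Icc (-r) r, pulseStream a t h (u - m * τ) := fun u => by
    by_cases hu : |u - θ| ≤ τ / 2
    · rw [tsum_pulseStream_sub_int_mul hτ (half_add_le_succ_mul_of_eq_ceil hτ hr) hhs ht hθ hu]
    · simp [k, hgs _ (not_le.mp hu)]
  calc _ = ∫ u, (∑ m ∈ Finset.Icc (-r) r, k (u + m * τ)) * pulseStream a t h u := by
        simp [k, pulseStream, map_sum, sub_add_eq_add_sub]
    _ = ∫ u, k u * ∑ m ∈ Finset.Icc (-r) r, pulseStream a t h (u - m * τ) :=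
        integral_sum_shift_mul_eq_integral_mul_sum_shift _ _ fun m _ => hint m
    _ = _ := by
        simp_rw [← hperiodic, pulseStream, sub_right_comm _ _ ((_ : ℤ) * τ)]
        rfl

/-- Filtering the finite stream `x̃(t) = ∑_l a_l h(t − t_l)` with the extended kernel
`g_r(t) = ∑_{m=−r}^r g(t + mτ)` and sampling at `θ ∈ [0,τ)` gives exactly the sample
obtained in the periodic setting, i.e. filtering the τ-periodic continuation of `x̃`
with the kernel `g`. Here `r = ⌈(R/τ + 3)/2⌉ − 1`, `g` is supported in `[−τ/2,τ/2]`
and `h` in `(−R/2, R/2)`, both bounded and measurable. -/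
theorem finite_stream_samples_equal_periodic_samples
    (τ R : ℝ) (hτ : 0 < τ) (hR : 0 < R)
    (r : ℤ) (hr : r = ⌈(R / τ + 3) / 2⌉ - 1)
    (g h : ℝ → ℂ) (hgm : Measurable g) (hhm : Measurable h)
    (Cg Ch : ℝ) (hgb : ∀ u : ℝ, ‖g u‖ ≤ Cg) (hhb : ∀ u : ℝ, ‖h u‖ ≤ Ch)
    (hgs : ∀ u : ℝ, τ / 2 < |u| → g u = 0)
    (hhs : ∀ u : ℝ, R / 2 ≤ |u| → h u = 0)
    (L : ℕ) (t : Fin L → ℝ) (a : Fin L → ℂ)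
    (ht : ∀ l, t l ∈ Set.Ico 0 τ)
    (θ : ℝ) (hθ : θ ∈ Set.Ico 0 τ) :
    (∫ u : ℝ,
        (starRingEnd ℂ) (∑ m ∈ Finset.Icc (-r) r, g (u - θ + m * τ)) *
          ∑ l, a l * h (u - t l)) =
    (∫ u : ℝ,
        (starRingEnd ℂ) (g (u - θ)) *
          ∑' m : ℤ, ∑ l, a l * h (u - t l - m * τ)) :=
  finite_stream_samples_equal_periodic_samples_general τ R hτ r hr g h hgm hhm Cg Ch hgb hhb hgs hhs
    L t a ht θ hθ
end

section
/- Let τ, R > 0, L ≥ 1, let K be a set of M consecutive integers with M ≥ 2L, and set r = ⌈(R/τ + 3)/2⌉ − 1. Let h : ℝ → ℂ be bounded, measurable, with h(t) = 0 for |t| ≥ R/2, and with ∫_ℝ h(t) e^{−2πi k t/τ} dt ≠ 0 for all k ∈ K. Let g(t) = 1_{[−τ/2,τ/2]}(t) Σ_{k∈K} b_k e^{2πi k t/τ} with all b_k ≠ 0, and let g_r(t) = Σ_{m=−r}^{r} g(t + mτ). Let N ≥ M, T > 0 with (N−1)T < τ, and define samples c[n] = ∫_ℝ conj(g_r(t −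 nT)) x̃(t) dt for n = 0,…,N−1. Then the samples uniquely determine the finite stream: if two finite streams of pulses built from h, each with at most L pulses, pairwise distinct delays in [0,τ) and nonzero amplitudes, yield identical samples c[n] for n = 0,…,N−1, then their numbers of pulses agree and there is a permutation matching their delay–amplitude pairs; in particular the two signals coincide. -/
open MeasureTheory Real

/-- The finite stream of pulses `x̃(t) = ∑_{l=1}^L a_l h(t − t_l)`. -/
noncomputable def finiteStream (h : ℝ → ℂ) {L : ℕ}
    (t : Fin L → ℝ) (a : Fin L → ℂ) : ℝ → ℂ :=
  fun u => ∑ l, a l * h (u - t l)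

/-!
On the support of every delayed pulse the truncated periodization `g_r` coincides with the
`τ`-periodic trigonometric polynomial `P = ∑_{k ∈ K} b_k e^{2πik·/τ}`, so each sample is
`c[n] = ∑_{k ∈ K} conj(b_k) ĥ(k) e^{2πiknT/τ} X(k)` with `X(k) = ∑_l a_l e^{-2πikt_l/τ}`.
As `(M - 1)T < τ`, the nodes `e^{2πikT/τ}`, `k ∈ K`, are distinct, and Vandermonde inversion
recovers `X` on `K`. Now `X(k)` is the `k`-th Fourier coefficient of the measure
`∑_l a_l δ_{t_l}` on `ℝ/τℤ`; the difference of two such measures has at most `2L ≤ M` atoms,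
so its vanishing Fourier coefficients at `M` consecutive frequencies force it to vanish, again
by Vandermonde.
-/

open Finsupp ComplexConjugate

theorem Finset.eq_zero_of_forall_sum_mul_pow_eq_zero {R ι : Type*} [CommRing R] [IsDomain R]
    {s : Finset ι} {z v : ι → R} (hz : Set.InjOn z s)
    (hv : ∀ n < s.card, ∑ i ∈ s, v i * z i ^ n = 0) : ∀ i ∈ s, v i = 0 := by
  have hzero := Matrix.eq_zero_of_forall_pow_sum_mul_pow_eq_zero
    (f := fun j => z (s.equivFin.symm j)) (v := fun j => v (s.equivFin.symm j))
    (fun j j' hjj' => s.equivFin.symm.injective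
      (Subtype.ext (hz (s.equivFin.symm j).2 (s.equivFin.symm j').2 hjj')))
    (fun n => by
      rw [← hv n n.2, ← Finset.sum_coe_sort s]
      exact Fintype.sum_equiv s.equivFin.symm _ _ fun _ => rfl)
  intro i hi
  simpa using congrFun hzero (s.equivFin ⟨i, hi⟩)

section Fourier

variable {T : ℝ}

theorem fourier_apply_add (k : ℤ) (x y : AddCircle T) :
    fourier k (x + y) = fourier k x * fourier k y := by
  rw [fourier_apply, fourier_apply, fourier_apply, smul_add, AddCircle.toCircle_add,
    Circle.coe_mul]

theorem fourier_apply_nsmul (k : ℤ) (n : ℕ) (x : AddCircle T) :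
    fourier k (n • x) = fourier k x ^ n := by
  rw [fourier_apply, fourier_apply, smul_comm, AddCircle.toCircle_nsmul, Circle.coe_pow]

theorem fourier_natCast_mul (n : ℕ) (k : ℤ) (x : AddCircle T) :
    fourier (n * k) x = fourier k x ^ n := by
  rw [fourier_apply, fourier_apply, mul_smul, natCast_zsmul, AddCircle.toCircle_nsmul,
    Circle.coe_pow]

theorem fourier_neg_apply_neg (k : ℤ) (x : AddCircle T) : fourier (-k) (-x) = fourier k x := by
  rw [fourier_apply, fourier_apply, neg_smul, smul_neg, neg_neg]

theorem fourier_neg_coe_apply (k : ℤ) (x : ℝ) :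
    fourier (-k) (x : AddCircle T) = Complex.exp (-(2 * π * Complex.I * k * x / T)) := by
  rw [fourier_coe_apply]; push_cast; ring_nf

theorem fourier_ne_zero (k : ℤ) (x : AddCircle T) : fourier k x ≠ 0 := by
  rw [fourier_apply]; exact Circle.coe_ne_zero _

theorem injective_fourier_neg_one (hT : T ≠ 0) :
    Function.Injective fun x : AddCircle T => fourier (-1) x := by
  intro x y hxy
  simp only [fourier_apply, neg_smul, one_smul, Circle.coe_inj] at hxy
  exact neg_injective (AddCircle.injective_toCircle hT hxy)

end Fourier

theorem injOn_coe_Ico {τ : ℝ} (hτ : 0 < τ) :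
    Set.InjOn (fun x : ℝ => (x : AddCircle τ)) (Set.Ico 0 τ) := by
  have := Fact.mk hτ
  intro x hx y hy hxy
  exact (AddCircle.coe_eq_coe_iff_of_mem_Ico (a := 0) (by rwa [zero_add])
    (by rwa [zero_add])).1 hxy

theorem sum_indicator_add_mul_eq_of_periodic {E : Type*} [AddCommMonoid E] {τ : ℝ} (hτ : 0 < τ)
    {p : ℝ → E} (hp : Function.Periodic p τ) {r : ℤ} {w : ℝ} (hw : |w| < (r + 1 / 2) * τ)
    (hw' : ∀ m : ℤ, w + m * τ ≠ τ / 2) :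
    ∑ m ∈ Finset.Icc (-r) r, (Set.Icc (-(τ / 2)) (τ / 2)).indicator p (w + m * τ) = p w := by
  set m₀ := -toIcoDiv hτ (-(τ / 2)) w
  have hmem : ∀ m : ℤ, w + m * τ ∈ Set.Icc (-(τ / 2)) (τ / 2) ↔ m = m₀ := by
    intro m
    constructor
    · rintro ⟨hl, hu⟩
      have hIco : w - (-m) • τ ∈ Set.Ico (-(τ / 2)) (-(τ / 2) + τ) := by
        simp only [neg_smul, zsmul_eq_mul, sub_neg_eq_add]
        exact ⟨hl, by linarith [lt_of_le_of_ne hu (hw' m)]⟩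
      simp [m₀, toIcoDiv_eq_of_sub_zsmul_mem_Ico hτ hIco]
    · rintro rfl
      have hIco := toIcoMod_mem_Ico hτ (-(τ / 2)) w
      rw [← self_sub_toIcoDiv_zsmul, zsmul_eq_mul] at hIco
      simp only [m₀, Int.cast_neg]
      exact ⟨by linarith [hIco.1], by linarith [hIco.2]⟩
  have hm₀ : m₀ ∈ Finset.Icc (-r) r := by
    obtain ⟨hl, hu⟩ := (hmem m₀).2 rfl
    obtain ⟨hwl, hwu⟩ := abs_lt.1 hw
    have h1 : (m₀ : ℝ) < r + 1 := lt_of_mul_lt_mul_right (by linarith) hτ.le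
    have h2 : (-r - 1 : ℝ) < m₀ := lt_of_mul_lt_mul_right (by linarith) hτ.le
    rw [Finset.mem_Icc]
    constructor
    · have : -r - 1 < m₀ := by exact_mod_cast h2
      omega
    · have : m₀ < r + 1 := by exact_mod_cast h1
      omega
  rw [Finset.sum_eq_single_of_mem m₀ hm₀
      fun m _ hm => Set.indicator_of_notMem (mt (hmem m).1 hm) _,
    Set.indicator_of_mem ((hmem m₀).2 rfl), hp.int_mul m₀ w]

/-- The choice of `r` makes the `2r + 1` shifted windows cover every `|w| < τ + R/2`. -/
theorem add_half_mul_le_of_eq_ceil {τ R : ℝ} (hτ : 0 < τ) {r : ℤ}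
    (hr : r = ⌈(R / τ + 3) / 2⌉ - 1) : τ + R / 2 ≤ (r + 1 / 2) * τ := by
  have hceil : (R / τ + 3) / 2 ≤ r + 1 := by
    rw [hr, Int.cast_sub, Int.cast_one, sub_add_cancel]; exact Int.le_ceil _
  have hRτ : R / τ * τ = R := div_mul_cancel₀ R hτ.ne'
  nlinarith

theorem ae_periodization_eq_trigPoly {τ R : ℝ} (hτ : 0 < τ) {K : Finset ℤ} {b : ℤ → ℂ}
    {g gr : ℝ → ℂ} {r : ℤ} (hr : r = ⌈(R / τ + 3) / 2⌉ - 1)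
    (hg : ∀ u : ℝ, g u = if u ∈ Set.Icc (-(τ / 2)) (τ / 2) then
        ∑ k ∈ K, b k * Complex.exp (2 * π * Complex.I * k * u / τ) else 0)
    (hgr : ∀ u : ℝ, gr u = ∑ m ∈ Finset.Icc (-r) r, g (u + m * τ)) :
    ∀ᵐ w, |w| < τ + R / 2 → gr w = ∑ k ∈ K, b k * fourier k (w : AddCircle τ) := by
  have hE : volume (Set.range fun m : ℤ => τ / 2 - m * τ) = 0 :=
    (Set.countable_range _).measure_zero _
  filter_upwards [measure_eq_zero_iff_ae_notMem.1 hE] with w hwE hw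
  have hg' : g = (Set.Icc (-(τ / 2)) (τ / 2)).indicator
      fun u => ∑ k ∈ K, b k * fourier k (u : AddCircle τ) := by
    ext u; simp [hg, Set.indicator_apply]
  rw [hgr, hg']
  exact sum_indicator_add_mul_eq_of_periodic hτ (fun u => by rw [AddCircle.coe_add_period])
    (hw.trans_le (add_half_mul_le_of_eq_ceil hτ hr)) fun m hm => hwE ⟨m, by linarith⟩

theorem integrable_of_bounded_of_eq_zero_of_le_abs {h : ℝ → ℂ} (hhm : Measurable h) {C R : ℝ}
    (hhb : ∀ u, ‖h u‖ ≤ C) (hhs : ∀ u : ℝ, R / 2 ≤ |u| → h u = 0) : Integrable h := by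
  have hsupp : Function.support h ⊆ Set.Icc (-(R / 2)) (R / 2) := fun u hu =>
    abs_le.1 (not_le.1 (mt (hhs u) hu)).le
  exact (integrableOn_iff_integrable_of_support_subset hsupp).1
    (Measure.integrableOn_of_bounded measure_Icc_lt_top.ne hhm.aestronglyMeasurable
      (ae_of_all _ hhb))

theorem integral_comp_sub_mul_fourier {τ : ℝ} (h : ℝ → ℂ) (k : ℤ) (t : ℝ) :
    ∫ u, h (u - t) * fourier k (u : AddCircle τ)
      = fourier k (t : AddCircle τ) * ∫ u, h u * fourier k (u : AddCircle τ) := by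
  rw [← integral_add_right_eq_self _ t, ← integral_const_mul]
  congr 1; ext u
  rw [add_sub_cancel_right, AddCircle.coe_add, fourier_apply_add]; ring

theorem integral_conj_trigPoly_mul_finiteStream {τ : ℝ} (K : Finset ℤ) (b : ℤ → ℂ)
    {h : ℝ → ℂ} (hh : Integrable h) {L : ℕ} (t : Fin L → ℝ) (a : Fin L → ℂ) (s : ℝ) :
    ∫ u, conj (∑ k ∈ K, b k * fourier k ((u - s : ℝ) : AddCircle τ)) * finiteStream h t a u
      = ∑ k ∈ K, conj (b k) * (∫ u, h u * fourier (-k) (u : AddCircle τ)) *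
          fourier k (s : AddCircle τ) * ∑ l, a l * fourier (-k) (t l : AddCircle τ) := by
  have hint : ∀ k l, Integrable fun u => h (u - t l) * fourier (-k) (u : AddCircle τ) :=
    fun k l => (hh.comp_sub_right (t l)).mul_bdd
      ((fourier (-k)).continuous.comp continuous_quotient_mk').aestronglyMeasurable
      (ae_of_all _ fun u => by rw [fourier_apply, Circle.norm_coe])
  have hexpand : ∀ u : ℝ,
      conj (∑ k ∈ K, b k * fourier k ((u - s : ℝ) : AddCircle τ)) * finiteStream h t a u
        = ∑ k ∈ K, ∑ l, (conj (b k) * fourier k (s : AddCircle τ) * a l) *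
            (h (u - t l) * fourier (-k) (u : AddCircle τ)) := by
    intro u
    simp only [finiteStream, map_sum, map_mul, Finset.sum_mul, Finset.mul_sum]
    rw [Finset.sum_comm]
    refine Finset.sum_congr rfl fun k _ => Finset.sum_congr rfl fun l _ => ?_
    rw [← fourier_neg, AddCircle.coe_sub, sub_eq_add_neg, fourier_apply_add,
      fourier_neg_apply_neg]
    ring
  simp_rw [hexpand]
  rw [integral_finsetSum _ fun k _ => integrable_finsetSum _ fun l _ => (hint k l).const_mul _]
  refine Finset.sum_congr rfl fun k _ => ?_
  rw [integral_finsetSum _ fun l _ => (hint k l).const_mul _, Finset.mul_sum]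
  refine Finset.sum_congr rfl fun l _ => ?_
  rw [integral_const_mul, integral_comp_sub_mul_fourier]
  ring

theorem integral_conj_mul_finiteStream_congr {G P : ℝ → ℂ} {ρ R : ℝ}
    (hGP : ∀ᵐ w, |w| < ρ → G w = P w) {h : ℝ → ℂ} (hhs : ∀ u, R / 2 ≤ |u| → h u = 0)
    {L : ℕ} (t : Fin L → ℝ) (a : Fin L → ℂ) {s : ℝ} (hts : ∀ l, |t l - s| + R / 2 ≤ ρ) :
    ∫ u, conj (G (u - s)) * finiteStream h t a u
      = ∫ u, conj (P (u - s)) * finiteStream h t a u := by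
  refine integral_congr_ae ?_
  filter_upwards [(measurePreserving_sub_right volume s).quasiMeasurePreserving.ae hGP]
    with u hu
  by_cases hx : finiteStream h t a u = 0
  · simp [hx]
  obtain ⟨l, -, hl⟩ := Finset.exists_ne_zero_of_sum_ne_zero hx
  have hul : |u - t l| < R / 2 := not_le.1 fun hle => hl (by rw [hhs _ hle, mul_zero])
  rw [hu (by linarith [abs_sub_le u (t l) s, hts l])]

theorem integral_conj_mul_finiteStream_eq_sum {τ R : ℝ} {K : Finset ℤ} {b : ℤ → ℂ}
    {gr h : ℝ → ℂ}
    (hgrP : ∀ᵐ w, |w| < τ + R / 2 → gr w = ∑ k ∈ K, b k * fourier k (w : AddCircle τ))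
    (hh : Integrable h) (hhs : ∀ u, R / 2 ≤ |u| → h u = 0) {L : ℕ} {t : Fin L → ℝ}
    (a : Fin L → ℂ) (ht : ∀ l, t l ∈ Set.Ico 0 τ) {s : ℝ} (hs : s ∈ Set.Icc 0 τ) :
    ∫ u, conj (gr (u - s)) * finiteStream h t a u
      = ∑ k ∈ K, conj (b k) * (∫ u, h u * fourier (-k) (u : AddCircle τ)) *
          fourier k (s : AddCircle τ) * ∑ l, a l * fourier (-k) (t l : AddCircle τ) := by
  refine (integral_conj_mul_finiteStream_congr hgrP hhs t a fun l => ?_).trans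
    (integral_conj_trigPoly_mul_finiteStream K b hh t a s)
  have hts : |t l - s| ≤ τ := abs_sub_le_iff.2 ⟨by linarith [(ht l).2, hs.1],
    by linarith [(ht l).1, hs.2]⟩
  linarith

theorem injOn_fourier_Icc {τ T : ℝ} (hτ : 0 < τ) (hT : 0 < T) {k₀ : ℤ} {M : ℕ}
    (hMT : ((M : ℝ) - 1) * T < τ) :
    Set.InjOn (fun k : ℤ => fourier k (T : AddCircle τ)) (Finset.Icc k₀ (k₀ + M - 1)) := by
  have := Fact.mk hτ
  have hmem : ∀ j ∈ Finset.Icc k₀ (k₀ + M - 1), (j * T : ℝ) ∈ Set.Ico (k₀ * T) (k₀ * T + τ) := by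
    intro j hj
    obtain ⟨h1, h2⟩ := Finset.mem_Icc.1 hj
    have h1' : (k₀ : ℝ) ≤ j := by exact_mod_cast h1
    have h2' : (j : ℝ) ≤ k₀ + M - 1 := by exact_mod_cast h2
    constructor <;> nlinarith
  intro k hk k' hk' hkk'
  simp only [fourier_apply, Circle.coe_inj] at hkk'
  have hcoe := AddCircle.injective_toCircle hτ.ne' hkk'
  rw [← AddCircle.coe_zsmul, ← AddCircle.coe_zsmul, zsmul_eq_mul, zsmul_eq_mul,
    AddCircle.coe_eq_coe_iff_of_mem_Ico (hmem k hk) (hmem k' hk')] at hcoe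
  exact_mod_cast mul_right_cancel₀ hT.ne' hcoe

theorem eqOn_Icc_of_sum_mul_fourier_eq {τ T : ℝ} (hτ : 0 < τ) (hT : 0 < T) {k₀ : ℤ} {M N : ℕ}
    (hMN : M ≤ N) (hNT : ((N : ℝ) - 1) * T < τ) {c X₁ X₂ : ℤ → ℂ}
    (hc : ∀ k ∈ Finset.Icc k₀ (k₀ + M - 1), c k ≠ 0)
    (h : ∀ n < N,
      ∑ k ∈ Finset.Icc k₀ (k₀ + M - 1), c k * fourier k ((n * T : ℝ) : AddCircle τ) * X₁ k =
        ∑ k ∈ Finset.Icc k₀ (k₀ + M - 1), c k * fourier k ((n * T : ℝ) : AddCircle τ) * X₂ k) :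
    ∀ k ∈ Finset.Icc k₀ (k₀ + M - 1), X₁ k = X₂ k := by
  have hMT : ((M : ℝ) - 1) * T < τ := lt_of_le_of_lt (by gcongr) hNT
  have hcard : (Finset.Icc k₀ (k₀ + M - 1)).card = M := by simp
  have hv := Finset.eq_zero_of_forall_sum_mul_pow_eq_zero (injOn_fourier_Icc (k₀ := k₀) hτ hT hMT)
    (v := fun k => c k * (X₁ k - X₂ k)) fun n hn => by
      rw [← sub_eq_zero.2 (h n (by omega)), ← Finset.sum_sub_distrib]
      refine Finset.sum_congr rfl fun k _ => ?_
      rw [← nsmul_eq_mul, AddCircle.coe_nsmul, fourier_apply_nsmul]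
      ring
  exact fun k hk => sub_eq_zero.1 ((mul_eq_zero.1 (hv k hk)).resolve_left (hc k hk))

theorem Finsupp.eq_zero_of_linearCombination_fourier_eq_zero {T : ℝ} (hT : T ≠ 0)
    {μ : AddCircle T →₀ ℂ} {k₀ : ℤ} {M : ℕ} (hμ : μ.support.card ≤ M)
    (h : ∀ n < M, linearCombination ℂ (fun x => fourier (-(k₀ + n)) x) μ = 0) : μ = 0 := by
  have hv := Finset.eq_zero_of_forall_sum_mul_pow_eq_zero (s := μ.support)
    (injective_fourier_neg_one hT).injOn (v := fun x => μ x * fourier (-k₀) x) fun n hn => by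
      rw [← h n (hn.trans_le hμ), linearCombination_apply, Finsupp.sum]
      refine Finset.sum_congr rfl fun x _ => ?_
      rw [smul_eq_mul, show -(k₀ + (n : ℤ)) = -k₀ + n * (-1) by ring, fourier_add,
        fourier_natCast_mul]
      ring
  ext x
  by_cases hx : x ∈ μ.support
  · simpa [fourier_ne_zero] using hv x hx
  · exact notMem_support_iff.1 hx

noncomputable def diracSum {ι α : Type*} [Finite ι] (t : ι → α) (a : ι → ℂ) : α →₀ ℂ :=
  mapDomain t (equivFunOnFinite.symm a)

section diracSum

variable {ι α : Type*} {t : ι → α} {a : ι → ℂ}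

theorem linearCombination_diracSum [Fintype ι] (v : α → ℂ) :
    linearCombination ℂ v (diracSum t a) = ∑ i, a i * v (t i) := by
  rw [diracSum, linearCombination_mapDomain, linearCombination_apply, Finsupp.sum_fintype]
  · simp
  · simp

theorem card_support_diracSum_le [Fintype ι] [DecidableEq α] :
    (diracSum t a).support.card ≤ Fintype.card ι :=
  (Finset.card_le_card mapDomain_support).trans (Finset.card_image_le.trans
    (Finset.card_le_univ _))

theorem diracSum_apply [Finite ι] (ht : Function.Injective t) (i : ι) :
    diracSum t a (t i) = a i := by
  rw [diracSum, mapDomain_apply ht, coe_equivFunOnFinite_symm]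

theorem support_diracSum [Finite ι] (ht : Function.Injective t) (ha : ∀ i, a i ≠ 0) :
    Function.support (diracSum t a) = Set.range t := by
  ext x
  constructor
  · exact fun hx => by_contra fun hr => hx (mapDomain_of_notMem_range _ x hr)
  · rintro ⟨i, rfl⟩
    rw [Function.mem_support, diracSum_apply ht]
    exact ha i

end diracSum

theorem exists_equiv_of_diracSum_eq {ι₁ ι₂ α : Type*} [Finite ι₁] [Finite ι₂]
    {t₁ : ι₁ → α} {t₂ : ι₂ → α} (ht₁ : Function.Injective t₁) (ht₂ : Function.Injective t₂)
    {a₁ : ι₁ → ℂ} {a₂ : ι₂ → ℂ} (ha₁ : ∀ i, a₁ i ≠ 0) (ha₂ : ∀ j, a₂ j ≠ 0)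
    (h : diracSum t₁ a₁ = diracSum t₂ a₂) :
    ∃ σ : ι₁ ≃ ι₂, ∀ i, t₂ (σ i) = t₁ i ∧ a₂ (σ i) = a₁ i := by
  have hrange : Set.range t₁ = Set.range t₂ := by
    rw [← support_diracSum ht₁ ha₁, h, support_diracSum ht₂ ha₂]
  let σ := (Equiv.ofInjective t₁ ht₁).trans
    ((Equiv.setCongr hrange).trans (Equiv.ofInjective t₂ ht₂).symm)
  have hσ : ∀ i, t₂ (σ i) = t₁ i := fun i => by simp [σ, Equiv.apply_ofInjective_symm]
  refine ⟨σ, fun i => ⟨hσ i, ?_⟩⟩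
  rw [← diracSum_apply (a := a₂) ht₂ (σ i), hσ, ← h, diracSum_apply ht₁]

theorem diracSum_eq_of_sum_fourier_eq {T : ℝ} (hT : T ≠ 0) {ι₁ ι₂ : Type*} [Fintype ι₁]
    [Fintype ι₂] {t₁ : ι₁ → AddCircle T} {t₂ : ι₂ → AddCircle T} {a₁ : ι₁ → ℂ} {a₂ : ι₂ → ℂ}
    {k₀ : ℤ} {M : ℕ} (hM : Fintype.card ι₁ + Fintype.card ι₂ ≤ M)
    (h : ∀ n < M, ∑ i, a₁ i * fourier (-(k₀ + n)) (t₁ i)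
      = ∑ j, a₂ j * fourier (-(k₀ + n)) (t₂ j)) :
    diracSum t₁ a₁ = diracSum t₂ a₂ := by
  classical
  refine sub_eq_zero.1 (Finsupp.eq_zero_of_linearCombination_fourier_eq_zero hT (M := M)
    (k₀ := k₀) ?_ fun n hn => ?_)
  · exact (Finset.card_le_card support_sub).trans ((Finset.card_union_le _ _).trans
      ((add_le_add card_support_diracSum_le card_support_diracSum_le).trans hM))
  · rw [map_sub, linearCombination_diracSum, linearCombination_diracSum, h n hn, sub_self]

theorem finite_stream_uniquely_determined_by_samples_general
    (τ R : ℝ) (hτ : 0 < τ)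
    (L : ℕ)
    (M : ℕ) (hM : 2 * L ≤ M) (k₀ : ℤ) (K : Finset ℤ)
    (hK : K = Finset.Icc k₀ (k₀ + M - 1))
    (r : ℤ) (hr : r = ⌈(R / τ + 3) / 2⌉ - 1)
    (h : ℝ → ℂ) (hhm : Measurable h) (Ch : ℝ) (hhb : ∀ u : ℝ, ‖h u‖ ≤ Ch)
    (hhs : ∀ u : ℝ, R / 2 ≤ |u| → h u = 0)
    (hH : ∀ k ∈ K,
      (∫ u : ℝ, h u * Complex.exp (-(2 * π * Complex.I * k * u / τ))) ≠ 0)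
    (b : ℤ → ℂ) (hb : ∀ k ∈ K, b k ≠ 0)
    (g : ℝ → ℂ)
    (hg : ∀ u : ℝ, g u =
      if u ∈ Set.Icc (-(τ / 2)) (τ / 2) then
        ∑ k ∈ K, b k * Complex.exp (2 * π * Complex.I * k * u / τ)
      else 0)
    (gr : ℝ → ℂ) (hgr : ∀ u : ℝ, gr u = ∑ m ∈ Finset.Icc (-r) r, g (u + m * τ))
    (N : ℕ) (hN : M ≤ N) (T : ℝ) (hT : 0 < T) (hNT : ((N : ℝ) - 1) * T < τ)
    (L₁ L₂ : ℕ) (hL₁ : L₁ ≤ L) (hL₂ : L₂ ≤ L)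
    (t₁ : Fin L₁ → ℝ) (a₁ : Fin L₁ → ℂ)
    (t₂ : Fin L₂ → ℝ) (a₂ : Fin L₂ → ℂ)
    (ht₁ : ∀ l, t₁ l ∈ Set.Ico 0 τ) (ht₁' : Function.Injective t₁)
    (ha₁ : ∀ l, a₁ l ≠ 0)
    (ht₂ : ∀ l, t₂ l ∈ Set.Ico 0 τ) (ht₂' : Function.Injective t₂)
    (ha₂ : ∀ l, a₂ l ≠ 0)
    (hsamples : ∀ n : ℕ, n < N →
      (∫ u : ℝ, (starRingEnd ℂ) (gr (u - n * T)) * finiteStream h t₁ a₁ u) =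
      (∫ u : ℝ, (starRingEnd ℂ) (gr (u - n * T)) * finiteStream h t₂ a₂ u)) :
    L₁ = L₂ ∧
    (∃ σ : Fin L₁ ≃ Fin L₂, ∀ l, t₂ (σ l) = t₁ l ∧ a₂ (σ l) = a₁ l) ∧
    (∀ u : ℝ, finiteStream h t₁ a₁ u = finiteStream h t₂ a₂ u) := by
  have := Fact.mk hτ
  subst hK
  have hint := integrable_of_bounded_of_eq_zero_of_le_abs hhm hhb hhs
  have hgrP := ae_periodization_eq_trigPoly hτ hr hg hgr
  have hnT : ∀ n < N, (n * T : ℝ) ∈ Set.Icc 0 τ := fun n hn => ⟨by positivity, by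
    have : (n : ℝ) ≤ N - 1 := by rw [le_sub_iff_add_le]; exact_mod_cast hn
    nlinarith⟩
  have hX := eqOn_Icc_of_sum_mul_fourier_eq hτ hT hN hNT
    (c := fun k => conj (b k) * ∫ u, h u * fourier (-k) (u : AddCircle τ))
    (fun k hk => mul_ne_zero ((map_ne_zero _).2 (hb k hk))
      (by simpa only [fourier_neg_coe_apply] using hH k hk))
    fun n hn =>
      (integral_conj_mul_finiteStream_eq_sum hgrP hint hhs a₁ ht₁ (hnT n hn)).symm.trans <|
        (hsamples n hn).trans <|
          integral_conj_mul_finiteStream_eq_sum hgrP hint hhs a₂ ht₂ (hnT n hn)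
  have hD := diracSum_eq_of_sum_fourier_eq (t₁ := fun l => (t₁ l : AddCircle τ))
    (t₂ := fun l => (t₂ l : AddCircle τ)) hτ.ne' (k₀ := k₀) (M := M) (by simp; omega)
    fun n hn => hX (k₀ + n) (by simp; omega)
  obtain ⟨σ, hσ⟩ := exists_equiv_of_diracSum_eq
    (fun l l' hll' => ht₁' (injOn_coe_Ico hτ (ht₁ l) (ht₁ l') hll'))
    (fun l l' hll' => ht₂' (injOn_coe_Ico hτ (ht₂ l) (ht₂ l') hll')) ha₁ ha₂ hD
  have hσt : ∀ l, t₂ (σ l) = t₁ l := fun l => injOn_coe_Ico hτ (ht₂ _) (ht₁ l) (hσ l).1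
  refine ⟨by simpa using Fintype.card_congr σ, ⟨σ, fun l => ⟨hσt l, (hσ l).2⟩⟩, fun u => ?_⟩
  exact Fintype.sum_equiv σ _ _ fun l => by rw [hσt, (hσ l).2]

/-- Uniqueness of a finite stream of pulses from `N ≥ M ≥ 2L` uniform samples taken
after filtering with the extended SoS kernel `g_r(t) = ∑_{m=−r}^r g(t + mτ)`, where
`g(t) = 1_{[−τ/2,τ/2]}(t) ∑_{k∈K} b_k e^{2πikt/τ}` with nonzero coefficients,
`r = ⌈(R/τ + 3)/2⌉ − 1`, and `h` is a bounded measurable pulse supported in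
`(−R/2, R/2)` whose Fourier transform is nonzero at `2πk/τ` for all `k ∈ K`. -/
theorem finite_stream_uniquely_determined_by_samples
    (τ R : ℝ) (hτ : 0 < τ) (hR : 0 < R)
    (L : ℕ) (hL : 1 ≤ L)
    (M : ℕ) (hM : 2 * L ≤ M) (k₀ : ℤ) (K : Finset ℤ)
    (hK : K = Finset.Icc k₀ (k₀ + M - 1))
    (r : ℤ) (hr : r = ⌈(R / τ + 3) / 2⌉ - 1)
    (h : ℝ → ℂ) (hhm : Measurable h) (Ch : ℝ) (hhb : ∀ u : ℝ, ‖h u‖ ≤ Ch)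
    (hhs : ∀ u : ℝ, R / 2 ≤ |u| → h u = 0)
    (hH : ∀ k ∈ K,
      (∫ u : ℝ, h u * Complex.exp (-(2 * π * Complex.I * k * u / τ))) ≠ 0)
    (b : ℤ → ℂ) (hb : ∀ k ∈ K, b k ≠ 0)
    (g : ℝ → ℂ)
    (hg : ∀ u : ℝ, g u =
      if u ∈ Set.Icc (-(τ / 2)) (τ / 2) then
        ∑ k ∈ K, b k * Complex.exp (2 * π * Complex.I * k * u / τ)
      else 0)
    (gr : ℝ → ℂ) (hgr : ∀ u : ℝ, gr u = ∑ m ∈ Finset.Icc (-r) r, g (u + m * τ))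
    (N : ℕ) (hN : M ≤ N) (T : ℝ) (hT : 0 < T) (hNT : ((N : ℝ) - 1) * T < τ)
    (L₁ L₂ : ℕ) (hL₁ : L₁ ≤ L) (hL₂ : L₂ ≤ L)
    (t₁ : Fin L₁ → ℝ) (a₁ : Fin L₁ → ℂ)
    (t₂ : Fin L₂ → ℝ) (a₂ : Fin L₂ → ℂ)
    (ht₁ : ∀ l, t₁ l ∈ Set.Ico 0 τ) (ht₁' : Function.Injective t₁)
    (ha₁ : ∀ l, a₁ l ≠ 0)
    (ht₂ : ∀ l, t₂ l ∈ Set.Ico 0 τ) (ht₂' : Function.Injective t₂)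
    (ha₂ : ∀ l, a₂ l ≠ 0)
    (hsamples : ∀ n : ℕ, n < N →
      (∫ u : ℝ, (starRingEnd ℂ) (gr (u - n * T)) * finiteStream h t₁ a₁ u) =
      (∫ u : ℝ, (starRingEnd ℂ) (gr (u - n * T)) * finiteStream h t₂ a₂ u)) :
    L₁ = L₂ ∧
    (∃ σ : Fin L₁ ≃ Fin L₂, ∀ l, t₂ (σ l) = t₁ l ∧ a₂ (σ l) = a₁ l) ∧
    (∀ u : ℝ, finiteStream h t₁ a₁ u = finiteStream h t₂ a₂ u) :=
  finite_stream_uniquely_determined_by_samples_general τ R hτ L M hM k₀ K hK r hr h hhm Ch hhb hhs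
    hH b hb g hg gr hgr N hN T hT hNT L₁ L₂ hL₁ hL₂ t₁ a₁ t₂ a₂ ht₁ ht₁' ha₁ ht₂ ht₂' ha₂ hsamples
end

section
/- Let L₀ ≥ 1, let L, L′ ≤ L₀, let u_1,…,u_L be pairwise distinct nonzero complex numbers with nonzero coefficients a_1,…,a_L ∈ ℂ, and let u′_1,…,u′_{L′} be pairwise distinct nonzero complex numbers with nonzero coefficients a′_1,…,a′_{L′} ∈ ℂ. If Σ_{l=1}^{L} a_l u_l^k = Σ_{l=1}^{L′} a′_l (u′_l)^k for all k = 0, 1, …, 2L₀ − 1, then L = L′ and there is a permutation σ of {1,…,L} with u′_l = u_{σ(l)} and a′_l = a_{σ(l)} for all l. In particular, 2L samples y_k = Σ_{l=1}^L a_l e^{−2πi k t_l/τ}, k = 0,…,2L−1, with distinct delays t_l ∈ [0,τ) and nonzero amplitudes, uniquely determine the delay–amplitude pairs {(t_l, a_l)}. -/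
open Real

private lemma key_uniqueness (L L' N : ℕ) (hN : L + L' ≤ N)
    (u : Fin L → ℂ) (a : Fin L → ℂ)
    (hu : Function.Injective u) (ha : ∀ l, a l ≠ 0)
    (u' : Fin L' → ℂ) (a' : Fin L' → ℂ)
    (hu' : Function.Injective u') (ha' : ∀ l, a' l ≠ 0)
    (heq : ∀ k : ℕ, k < N →
      ∑ l, a l * u l ^ k = ∑ l, a' l * u' l ^ k) :
    L = L' ∧ ∃ σ : Fin L ≃ Fin L', ∀ l, u' (σ l) = u l ∧ a' (σ l) = a l := by
  classical
  set S : Finset ℂ := Finset.univ.image u ∪ Finset.univ.image u' with hS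
  set b : ℂ → ℂ := fun v =>
    (∑ l ∈ Finset.univ.filter (fun l => u l = v), a l) -
    (∑ l ∈ Finset.univ.filter (fun l => u' l = v), a' l) with hb
  -- vanishing of moments of b
  have hcard : S.card ≤ N := by
    calc S.card ≤ (Finset.univ.image u).card + (Finset.univ.image u').card :=
          Finset.card_union_le _ _
      _ ≤ L + L' := by
          have h1 : (Finset.univ.image u).card ≤ L :=
            le_trans Finset.card_image_le (by simp)
          have h2 : (Finset.univ.image u').card ≤ L' :=
            le_trans Finset.card_image_le (by simp)
          omega
      _ ≤ N := hN
  have hsum : ∀ k : ℕ, k < N → ∑ v ∈ S, b v * v ^ k = 0 := by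
    intro k hk
    have h1 : ∑ v ∈ S, (∑ l ∈ Finset.univ.filter (fun l => u l = v), a l) * v ^ k
        = ∑ l, a l * u l ^ k := by
      rw [← Finset.sum_fiberwise_of_maps_to (g := u) (fun l _ =>
        Finset.mem_union_left _ (Finset.mem_image_of_mem _ (Finset.mem_univ l)))]
      refine Finset.sum_congr rfl fun v _ => ?_
      rw [Finset.sum_mul]
      refine Finset.sum_congr rfl fun l hl => ?_
      rw [(Finset.mem_filter.mp hl).2]
    have h2 : ∑ v ∈ S, (∑ l ∈ Finset.univ.filter (fun l => u' l = v), a' l) * v ^ k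
        = ∑ l, a' l * u' l ^ k := by
      rw [← Finset.sum_fiberwise_of_maps_to (g := u') (fun l _ =>
        Finset.mem_union_right _ (Finset.mem_image_of_mem _ (Finset.mem_univ l)))]
      refine Finset.sum_congr rfl fun v _ => ?_
      rw [Finset.sum_mul]
      refine Finset.sum_congr rfl fun l hl => ?_
      rw [(Finset.mem_filter.mp hl).2]
    simp only [hb, sub_mul]
    rw [Finset.sum_sub_distrib, h1, h2, heq k hk, sub_self]
  -- b vanishes on S via Vandermonde
  have hb0 : ∀ v ∈ S, b v = 0 := by
    have e : Fin S.card ≃ {x // x ∈ S} := S.equivFin.symm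
    have hw : Function.Injective (fun i : Fin S.card => (e i : ℂ)) :=
      Subtype.val_injective.comp e.injective
    have hz : (fun i : Fin S.card => b (e i : ℂ)) = 0 := by
      apply Matrix.eq_zero_of_forall_pow_sum_mul_pow_eq_zero hw
      intro i
      have : ∑ j : Fin S.card, b (e j : ℂ) * (e j : ℂ) ^ (i : ℕ)
          = ∑ v ∈ S, b v * v ^ (i : ℕ) := by
        rw [← Finset.sum_coe_sort S (fun v => b v * v ^ (i : ℕ))]
        exact (Equiv.sum_comp e (fun x : {x // x ∈ S} => b (x : ℂ) * (x : ℂ) ^ (i : ℕ)))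
      rw [this]
      exact hsum i (lt_of_lt_of_le i.isLt hcard)
    intro v hv
    have := congrFun hz (e.symm ⟨v, hv⟩)
    simpa using this
  -- fibre computation
  have hfib : ∀ l : Fin L, ∃ l' : Fin L', u' l' = u l ∧ a' l' = a l := by
    intro l
    have hmem : u l ∈ S := Finset.mem_union_left _ (Finset.mem_image_of_mem _ (Finset.mem_univ l))
    have h0 := hb0 (u l) hmem
    have hfil : Finset.univ.filter (fun l' => u l' = u l) = {l} := by
      ext l'; simp [hu.eq_iff]
    simp only [hb] at h0
    rw [hfil, Finset.sum_singleton] at h0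
    have hne : (∑ l' ∈ Finset.univ.filter (fun l' => u' l' = u l), a' l') = a l := by
      linear_combination -h0
    by_cases hex : ∃ l', u' l' = u l
    · obtain ⟨l', hl'⟩ := hex
      have hfil' : Finset.univ.filter (fun x => u' x = u l) = {l'} := by
        ext x
        simp only [Finset.mem_filter, Finset.mem_univ, true_and, Finset.mem_singleton]
        constructor
        · intro hx; exact hu' (hx.trans hl'.symm)
        · rintro rfl; exact hl'
      rw [hfil', Finset.sum_singleton] at hne
      exact ⟨l', hl', hne⟩
    · exfalso
      have : Finset.univ.filter (fun x => u' x = u l) = ∅ := by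
        ext x; simp only [Finset.mem_filter, Finset.mem_univ, true_and,
          Finset.notMem_empty, iff_false]
        exact fun hx => hex ⟨x, hx⟩
      rw [this, Finset.sum_empty] at hne
      exact ha l hne.symm
  have hfib' : ∀ l' : Fin L', ∃ l : Fin L, u l = u' l' ∧ a l = a' l' := by
    intro l'
    have hmem : u' l' ∈ S := Finset.mem_union_right _ (Finset.mem_image_of_mem _ (Finset.mem_univ l'))
    have h0 := hb0 (u' l') hmem
    have hfil : Finset.univ.filter (fun x => u' x = u' l') = {l'} := by
      ext x; simp [hu'.eq_iff]
    simp only [hb] at h0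
    rw [hfil, Finset.sum_singleton, sub_eq_zero] at h0
    by_cases hex : ∃ l, u l = u' l'
    · obtain ⟨l, hl⟩ := hex
      have hfil' : Finset.univ.filter (fun x => u x = u' l') = {l} := by
        ext x
        simp only [Finset.mem_filter, Finset.mem_univ, true_and, Finset.mem_singleton]
        constructor
        · intro hx; exact hu (hx.trans hl.symm)
        · rintro rfl; exact hl
      rw [hfil', Finset.sum_singleton] at h0
      exact ⟨l, hl, h0⟩
    · exfalso
      have : Finset.univ.filter (fun x => u x = u' l') = ∅ := by
        ext x; simp only [Finset.mem_filter, Finset.mem_univ, true_and,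
          Finset.notMem_empty, iff_false]
        exact fun hx => hex ⟨x, hx⟩
      rw [this, Finset.sum_empty] at h0
      exact ha' l' h0.symm
  choose f hf1 hf2 using hfib
  choose g hg1 hg2 using hfib'
  have hfinj : Function.Injective f := fun x y hxy => hu ((hf1 x).symm.trans (hxy ▸ hf1 y))
  have hginj : Function.Injective g := fun x y hxy => hu' ((hg1 x).symm.trans (hxy ▸ hg1 y))
  have hLL' : L = L' := by
    have h1 : L ≤ L' := by simpa using Fintype.card_le_of_injective f hfinj
    have h2 : L' ≤ L := by simpa using Fintype.card_le_of_injective g hginj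
    omega
  refine ⟨hLL', ?_⟩
  have hbij : Function.Bijective f :=
    (Fintype.bijective_iff_injective_and_card f).mpr ⟨hfinj, by simp [hLL']⟩
  exact ⟨Equiv.ofBijective f hbij, fun l => ⟨hf1 l, hf2 l⟩⟩

private lemma exp_inj_Ico {τ : ℝ} (hτ : 0 < τ) {s s' : ℝ}
    (hs : s ∈ Set.Ico 0 τ) (hs' : s' ∈ Set.Ico 0 τ)
    (h : Complex.exp (-(2 * ↑π * Complex.I * s / τ)) =
         Complex.exp (-(2 * ↑π * Complex.I * s' / τ))) : s = s' := by
  rw [Complex.exp_eq_exp_iff_exists_int] at h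
  obtain ⟨n, hn⟩ := h
  have hI : (2 * (π : ℂ) * Complex.I) ≠ 0 := by
    simp [Real.pi_ne_zero, Complex.I_ne_zero]
  have hτ0 : (τ : ℂ) ≠ 0 := by exact_mod_cast hτ.ne'
  have key : (s' : ℂ) - s = n * τ := by
    have h2 := congrArg (fun z => z * (τ:ℂ)) hn
    simp only [neg_mul, div_mul_cancel₀ _ hτ0, add_mul, neg_div] at h2
    have h3 : (2 * (π:ℂ) * Complex.I) * ((s':ℂ) - s - n * τ) = 0 := by
      linear_combination h2
    rcases mul_eq_zero.mp h3 with h | h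
    · exact absurd h hI
    · linear_combination h
  have keyR : s' - s = n * τ := by exact_mod_cast key
  have habs : |s' - s| < τ := by
    rw [abs_lt]
    constructor <;> [nlinarith [hs.1, hs.2, hs'.1, hs'.2]; nlinarith [hs.1, hs.2, hs'.1, hs'.2]]
  have hn0 : n = 0 := by
    by_contra hn0
    have : (1 : ℝ) ≤ |(n : ℝ)| := by
      exact_mod_cast Int.one_le_abs (by exact_mod_cast hn0 : n ≠ 0)
    rw [keyR, abs_mul, abs_of_pos hτ] at habs
    nlinarith
  rw [hn0] at keyR
  simp at keyR
  linarith

/-- Uniqueness of a sum of complex exponentials: two representations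
`∑_{l=1}^L a_l u_l^k` and `∑_{l=1}^{L'} a'_l (u'_l)^k`, with pairwise distinct nonzero
nodes and nonzero coefficients and `L, L' ≤ L₀`, agreeing for `k = 0, …, 2L₀−1`, must
have `L = L'` and matching node–coefficient pairs up to a permutation. In particular,
`2L` samples `y_k = ∑_l a_l e^{−2πikt_l/τ}` with distinct delays `t_l ∈ [0,τ)` and
nonzero amplitudes uniquely determine the delay–amplitude pairs. -/
theorem exponential_sum_uniqueness
    (L₀ L L' : ℕ) (hL₀ : 1 ≤ L₀) (hL : L ≤ L₀) (hL' : L' ≤ L₀)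
    (u : Fin L → ℂ) (a : Fin L → ℂ)
    (hu : Function.Injective u) (hu0 : ∀ l, u l ≠ 0) (ha : ∀ l, a l ≠ 0)
    (u' : Fin L' → ℂ) (a' : Fin L' → ℂ)
    (hu' : Function.Injective u') (hu0' : ∀ l, u' l ≠ 0) (ha' : ∀ l, a' l ≠ 0)
    (heq : ∀ k : ℕ, k < 2 * L₀ →
      ∑ l, a l * u l ^ k = ∑ l, a' l * u' l ^ k) :
    (L = L' ∧ ∃ σ : Fin L ≃ Fin L', ∀ l, u' (σ l) = u l ∧ a' (σ l) = a l) ∧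
    (∀ (Lq : ℕ) (τ : ℝ), 0 < τ →
      ∀ (t t' : Fin Lq → ℝ), (∀ l, t l ∈ Set.Ico 0 τ) → (∀ l, t' l ∈ Set.Ico 0 τ) →
      Function.Injective t → Function.Injective t' →
      ∀ (c c' : Fin Lq → ℂ), (∀ l, c l ≠ 0) → (∀ l, c' l ≠ 0) →
      (∀ k : ℕ, k < 2 * Lq →
        ∑ l, c l * Complex.exp (-(2 * π * Complex.I * k * (t l) / τ)) =
        ∑ l, c' l * Complex.exp (-(2 * π * Complex.I * k * (t' l) / τ))) →
      ∃ σ : Fin Lq ≃ Fin Lq, ∀ l, t' (σ l) = t l ∧ c' (σ l) = c l) := by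
  constructor
  · exact key_uniqueness L L' (2 * L₀) (by omega) u a hu ha u' a' hu' ha' heq
  · intro Lq τ hτ t t' ht ht' htinj ht'inj c c' hc hc' hsamp
    set v : Fin Lq → ℂ := fun l => Complex.exp (-(2 * ↑π * Complex.I * (t l) / τ)) with hv
    set v' : Fin Lq → ℂ := fun l => Complex.exp (-(2 * ↑π * Complex.I * (t' l) / τ)) with hv'
    have hvinj : Function.Injective v := fun x y hxy =>
      htinj (exp_inj_Ico hτ (ht x) (ht y) hxy)
    have hv'inj : Function.Injective v' := fun x y hxy =>
      ht'inj (exp_inj_Ico hτ (ht' x) (ht' y) hxy)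
    have hpow : ∀ (s : ℝ) (k : ℕ),
        Complex.exp (-(2 * ↑π * Complex.I * (s : ℂ) / τ)) ^ k =
        Complex.exp (-(2 * ↑π * Complex.I * (k : ℂ) * (s : ℂ) / τ)) := by
      intro s k
      rw [← Complex.exp_nat_mul]
      congr 1
      ring
    have heq' : ∀ k : ℕ, k < 2 * Lq → ∑ l, c l * v l ^ k = ∑ l, c' l * v' l ^ k := by
      intro k hk
      simp only [hv, hv', hpow]
      exact hsamp k hk
    obtain ⟨-, σ, hσ⟩ := key_uniqueness Lq Lq (2 * Lq) (by omega) v c hvinj hc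
      v' c' hv'inj hc' heq'
    exact ⟨σ, fun l => ⟨exp_inj_Ico hτ (ht' (σ l)) (ht l) ((hσ l).1),
      (hσ l).2⟩⟩
end
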